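/- arXiv:1108.1689 — 2 statements merged into one kernel-verified Lean document; each statement's English description precedes it below -/
import Mathlib

section
/- With g = -f⁻² as above and w* = 1/2, the absolute condition number κ_abs = 1/(|g''(w*)|·|w*|) equals 2 for every α > 0. -/
/-!
Since `wα²/(1+wα) = α - α/(1+wα)`, one has `f w = α(2+α) / p w` with `p w = (1+wα)(1+(1-w)α)`,
so near `w = 1/2` the function `g` is the polynomial `-p² / (α(2+α))²`. As `p` is symmetric about
`1/2`, `p'(1/2) = 0` and `g''(1/2) = -2 p(1/2) p'' / (α(2+α))²`; with `p(1/2) = (2+α)²/4` and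
`p'' = -2α²` this is exactly `1` for every `α`, so `κ_abs = 1 / (1 · 1/2) = 2`.
-/

open Topology Set

theorem hasDerivAt_deriv_const_mul_sq {p p' : ℝ → ℝ} {p'' : ℝ} (C x : ℝ)
    (hp : ∀ w, HasDerivAt p (p' w) w) (hp' : HasDerivAt p' p'' x) :
    HasDerivAt (deriv fun w => C * p w ^ 2) (2 * C * (p' x ^ 2 + p x * p'')) x := by
  have hderiv : deriv (fun w => C * p w ^ 2) = fun w => 2 * C * (p w * p' w) := by
    funext w
    exact (((hp w).pow 2).const_mul C).deriv.trans (by ring)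
  rw [hderiv]
  exact (((hp x).mul hp').const_mul (2 * C)).congr_deriv (by ring)

theorem mul_sq_div_one_add_mul_eq {a x : ℝ} (h : 1 + x * a ≠ 0) :
    x * a ^ 2 / (1 + x * a) = a - a / (1 + x * a) := by
  rw [eq_sub_iff_add_eq, ← add_div, div_eq_iff h]
  ring

theorem two_mul_sub_div_sub_div_eq {α w : ℝ} (hA : 1 + w * α ≠ 0) (hB : 1 + (1 - w) * α ≠ 0) :
    2 * α - w * α ^ 2 / (1 + w * α) - (1 - w) * α ^ 2 / (1 + (1 - w) * α)
      = α * (2 + α) / ((1 + w * α) * (1 + (1 - w) * α)) := by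
  rw [mul_sq_div_one_add_mul_eq hA, mul_sq_div_one_add_mul_eq hB]
  calc 2 * α - (α - α / (1 + w * α)) - (α - α / (1 + (1 - w) * α))
      = α / (1 + w * α) + α / (1 + (1 - w) * α) := by ring
    _ = α * (2 + α) / ((1 + w * α) * (1 + (1 - w) * α)) := by
      rw [div_add_div _ _ hA hB]; congr 1; ring

theorem neg_one_div_two_mul_sub_div_sub_div_sq_eq {α w : ℝ} (hA : 1 + w * α ≠ 0)
    (hB : 1 + (1 - w) * α ≠ 0) :
    -1 / (2 * α - w * α ^ 2 / (1 + w * α) - (1 - w) * α ^ 2 / (1 + (1 - w) * α)) ^ 2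
      = -1 / (α * (2 + α)) ^ 2 * ((1 + w * α) * (1 + (1 - w) * α)) ^ 2 := by
  rw [two_mul_sub_div_sub_div_eq hA hB, div_pow, div_div_eq_mul_div]
  ring

theorem preconditioned_condition_number (α : ℝ) (hα : 0 < α)
    (f g : ℝ → ℝ)
    (hf : ∀ w, f w = 2*α - w*α^2/(1+w*α) - (1-w)*α^2/(1+(1-w)*α))
    (hg : ∀ w, g w = -1/(f w)^2) :
    1 / (|deriv (deriv g) (1/2)| * |(1/2 : ℝ)|) = 2 := by
  set C := -1 / (α * (2 + α)) ^ 2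
  set p : ℝ → ℝ := fun w => (1 + w * α) * (1 + (1 - w) * α)
  have hp : ∀ w, HasDerivAt p (α ^ 2 * (1 - 2 * w)) w := fun w =>
    (((hasDerivAt_mul_const α).const_add 1).mul
      (((hasDerivAt_id' w).const_sub 1).mul_const α |>.const_add 1)).congr_deriv (by ring)
  have hp' : HasDerivAt (fun w => α ^ 2 * (1 - 2 * w)) (-2 * α ^ 2) (1 / 2) :=
    (((hasDerivAt_id' _).const_mul 2).const_sub 1 |>.const_mul _).congr_deriv (by ring)
  have hlocal : g =ᶠ[𝓝 (1 / 2)] fun w => C * p w ^ 2 := by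
    filter_upwards [Ioo_mem_nhds (by norm_num : (0 : ℝ) < 1 / 2) (by norm_num : (1 / 2 : ℝ) < 1)]
      with w ⟨hw0, hw1⟩
    rw [hg, hf]
    exact neg_one_div_two_mul_sub_div_sub_div_sq_eq (by positivity) (by nlinarith)
  have hsecond : deriv (deriv g) (1 / 2) = 1 := by
    rw [hlocal.deriv.deriv_eq, (hasDerivAt_deriv_const_mul_sq C _ hp hp').deriv]
    simp only [C, p]
    field_simp
    ring
  rw [hsecond]
  norm_num
end

section
/- For orthonormal v₁, v₂ ∈ ℝⁿ and α > 0, the function (w₁,w₂) ↦ Tr([α⁻¹I + w₁v₁v₁ᵀ + w₂v₂v₂ᵀ]⁻¹) restricted to the simplex {w₁+w₂=1, w₁,w₂ ≥ 0} attains its minimum uniquely at w₁ = w₂ = 1/2. -/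
/-!
`v₁v₁ᵀ` and `v₂v₂ᵀ` are orthogonal idempotents of trace one, so `α⁻¹I + w₁v₁v₁ᵀ + w₂v₂v₂ᵀ` is
inverted one eigenspace at a time and the trace of its inverse is
`nα - 2α + (α⁻¹ + w₁)⁻¹ + (α⁻¹ + w₂)⁻¹`. On the segment `w₁ + w₂ = 1` the points `α⁻¹ + wᵢ`
have midpoint `α⁻¹ + 1/2`, so strict convexity of `x ↦ x⁻¹` makes `w₁ = w₂ = 1/2` the unique
minimiser.
-/

open Matrix

namespace Matrix

theorem inv_smul_one_add_smul_add_smul {K m : Type*} [Field K] [Fintype m] [DecidableEq m]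
    {P Q : Matrix m m K} (hP : IsIdempotentElem P) (hQ : IsIdempotentElem Q)
    (hPQ : P * Q = 0) (hQP : Q * P = 0)
    {c a b : K} (hc : c ≠ 0) (ha : c + a ≠ 0) (hb : c + b ≠ 0) :
    (c • 1 + a • P + b • Q)⁻¹ = c⁻¹ • 1 + ((c + a)⁻¹ - c⁻¹) • P + ((c + b)⁻¹ - c⁻¹) • Q := by
  refine inv_eq_right_inv ?_
  simp only [add_mul, mul_add, smul_mul_smul_comm, one_mul, mul_one, hP.eq, hQ.eq, hPQ, hQP,
    smul_zero, add_zero]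
  match_scalars <;> field_simp <;> ring

theorem isIdempotentElem_vecMulVec_self {m R : Type*} [Fintype m] [CommSemiring R] {u : m → R}
    (hu : u ⬝ᵥ u = 1) : IsIdempotentElem (vecMulVec u u) := by
  rw [IsIdempotentElem, vecMulVec_mul_vecMulVec, hu, one_smul]

theorem vecMulVec_self_mul_vecMulVec_self {m R : Type*} [Fintype m] [CommSemiring R]
    {u v : m → R} (h : u ⬝ᵥ v = 0) : vecMulVec u u * vecMulVec v v = 0 := by
  rw [vecMulVec_mul_vecMulVec, h, zero_smul]
  ext
  simp [vecMulVec_apply]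

end Matrix

theorem two_mul_inv_avg_lt_inv_add_inv {x y : ℝ} (hx : 0 < x) (hy : 0 < y) (hxy : x ≠ y) :
    2 * ((x + y) / 2)⁻¹ < x⁻¹ + y⁻¹ := by
  have hconv := (strictConvexOn_zpow (m := -1) (by norm_num) (by norm_num)).2 (Set.mem_Ioi.2 hx)
    (Set.mem_Ioi.2 hy) hxy (by norm_num : (0:ℝ) < 1/2) (by norm_num : (0:ℝ) < 1/2) (by norm_num)
  simp only [_root_.zpow_neg_one, smul_eq_mul] at hconv
  rw [show (x + y) / 2 = 1 / 2 * x + 1 / 2 * y by ring]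
  linarith

theorem model_problem_matrix_unique_min (n : ℕ) (α : ℝ) (hα : 0 < α)
    (v₁ v₂ : Fin n → ℝ)
    (horth : ∑ i, v₁ i * v₂ i = 0)
    (hv₁ : ∑ i, v₁ i ^ 2 = 1) (hv₂ : ∑ i, v₂ i ^ 2 = 1) :
    ∀ w₁ w₂ : ℝ, 0 ≤ w₁ → 0 ≤ w₂ → w₁ + w₂ = 1 → (w₁, w₂) ≠ (1/2, 1/2) →
      (((α⁻¹ • (1 : Matrix (Fin n) (Fin n) ℝ)
          + (1/2 : ℝ) • vecMulVec v₁ v₁ + (1/2 : ℝ) • vecMulVec v₂ v₂))⁻¹).trace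
        < (((α⁻¹ • (1 : Matrix (Fin n) (Fin n) ℝ)
          + w₁ • vecMulVec v₁ v₁ + w₂ • vecMulVec v₂ v₂))⁻¹).trace := by
  intro w₁ w₂ hw₁ hw₂ hsum hne
  have hu₁ : v₁ ⬝ᵥ v₁ = 1 := by simpa [dotProduct, sq] using hv₁
  have hu₂ : v₂ ⬝ᵥ v₂ = 1 := by simpa [dotProduct, sq] using hv₂
  have htrace : ∀ a b : ℝ, 0 ≤ a → 0 ≤ b →
      ((α⁻¹ • 1 + a • vecMulVec v₁ v₁ + b • vecMulVec v₂ v₂)⁻¹).trace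
        = α * n + ((α⁻¹ + a)⁻¹ - α) + ((α⁻¹ + b)⁻¹ - α) := by
    intro a b ha hb
    rw [inv_smul_one_add_smul_add_smul (isIdempotentElem_vecMulVec_self hu₁)
      (isIdempotentElem_vecMulVec_self hu₂) (vecMulVec_self_mul_vecMulVec_self horth)
      (vecMulVec_self_mul_vecMulVec_self (by rwa [dotProduct_comm]))
      (by positivity) (by positivity) (by positivity)]
    simp [hu₁, hu₂]
  have hw : α⁻¹ + w₁ ≠ α⁻¹ + w₂ := fun h ↦ hne (by
    rw [Prod.mk.injEq]; constructor <;> linarith)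
  have hconv := two_mul_inv_avg_lt_inv_add_inv (by positivity) (by positivity) hw
  rw [show (α⁻¹ + w₁ + (α⁻¹ + w₂)) / 2 = α⁻¹ + 1 / 2 by linarith] at hconv
  rw [htrace _ _ hw₁ hw₂, htrace _ _ (by norm_num) (by norm_num)]
  linarith
end
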